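/- Let d ≥ 1 and order ℕ_ω^d componentwise, where ℕ_ω = ℕ ∪ {ω} with n ≤ ω for all n. For every n ∈ ℕ, A_n(ℕ_ω^d) is exactly the set of d-tuples having fewer than n components equal to ω. -/

import Mathlib

/-!
Passing below `z` can only make `⊤`-coordinates finite. If `z i = ⊤`, raising the `i`-th
coordinate of `z` through `0, 1, 2, …` is an acceleration candidate below `z` whose terms all
have exactly one `⊤` fewer than `z`. Conversely, every candidate below `z` eventually has fewer
`⊤`s than `z`: the tuples below `z` that are `⊤` wherever `z` is form a finite set, which holds
no infinite strictly increasing sequence. Induction on `n` then identifies `A_n`.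
-/

/-- `AccelSet Z 0 = ∅` and `AccelSet Z (n+1)` is the set of `z` such that every
acceleration candidate (infinite strictly increasing sequence) below `z` goes
through `AccelSet Z n`. -/
def AccelSet (Z : Type*) [PartialOrder Z] : ℕ → Set Z
  | 0 => ∅
  | n + 1 => {z : Z | ∀ f : ℕ → Z,
      (∀ i, f i < f (i + 1)) → (∀ i, f i ≤ z) → ∃ i, f i ∈ AccelSet Z n}

theorem mem_accelSet_succ {Z : Type*} [PartialOrder Z] {n : ℕ} {z : Z} :
    z ∈ AccelSet Z (n + 1) ↔
      ∀ f : ℕ → Z, StrictMono f → (∀ i, f i ≤ z) → ∃ i, f i ∈ AccelSet Z n := by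
  show (∀ f : ℕ → Z, _) ↔ _
  exact forall_congr' fun f =>
    imp_congr_left ⟨strictMono_nat_of_lt_succ, fun hf i => hf i.lt_succ_self⟩

namespace ENat

theorem finite_Iic_coe (n : ℕ) : (Set.Iic (n : ℕ∞)).Finite := by
  simpa using WithTop.image_coe_Iic (a := n) ▸ (Set.finite_Iic n).image _

theorem finite_Iic_of_ne_top {a : ℕ∞} (ha : a ≠ ⊤) : (Set.Iic a).Finite := by
  lift a to ℕ using ha
  exact finite_Iic_coe a

variable {ι : Type*}

theorem finite_setOf_le_of_top_eq_top [Finite ι] (z : ι → ℕ∞) :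
    {x : ι → ℕ∞ | x ≤ z ∧ ∀ i, z i = ⊤ → x i = ⊤}.Finite := by
  classical
  refine (Set.Finite.pi (t := fun i => if z i = ⊤ then {⊤} else Set.Iic (z i))
    fun i => ?_).subset ?_
  · split_ifs with h
    · exact Set.finite_singleton ⊤
    · exact finite_Iic_of_ne_top h
  · rintro x ⟨hxz, hx⟩ i -
    dsimp only
    split_ifs with h
    · exact hx i h
    · exact hxz i

theorem setOf_eq_top_subset_of_le {x z : ι → ℕ∞} (h : x ≤ z) :
    {i | x i = ⊤} ⊆ {i | z i = ⊤} :=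
  fun i hi => top_le_iff.mp (hi ▸ h i)

theorem exists_ncard_setOf_eq_top_lt [Finite ι] {z : ι → ℕ∞} {f : ℕ → ι → ℕ∞}
    (hf : StrictMono f) (hfz : ∀ j, f j ≤ z) :
    ∃ j, {i | f j i = ⊤}.ncard < {i | z i = ⊤}.ncard := by
  by_contra! h
  have hsame (j : ℕ) : {i | f j i = ⊤} = {i | z i = ⊤} :=
    Set.eq_of_subset_of_ncard_le (setOf_eq_top_subset_of_le (hfz j)) (h j)
  refine Set.infinite_range_of_injective hf.injective
    ((finite_setOf_le_of_top_eq_top z).subset ?_)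
  rintro _ ⟨j, rfl⟩
  exact ⟨hfz j, fun i hi => (hsame j).symm.subset hi⟩

theorem strictMono_update_coe [DecidableEq ι] (z : ι → ℕ∞) (i : ι) :
    StrictMono fun j : ℕ => Function.update z i (j : ℕ∞) :=
  fun _ _ h => update_lt_update_iff.mpr (Nat.cast_lt.mpr h)

theorem setOf_update_coe_eq_top [DecidableEq ι] (z : ι → ℕ∞) (i : ι) (j : ℕ) :
    {k | Function.update z i (j : ℕ∞) k = ⊤} = {k | z k = ⊤} \ {i} := by
  ext k
  by_cases hk : k = i <;> simp [hk]

theorem accelSet_pi [Finite ι] (n : ℕ) :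
    AccelSet (ι → ℕ∞) n = {z : ι → ℕ∞ | {i | z i = ⊤}.ncard < n} := by
  classical
  induction n with
  | zero => simp [AccelSet]
  | succ n ih =>
    ext z
    rw [mem_accelSet_succ, ih, Set.mem_ofPred_eq]
    constructor
    · intro h
      by_contra! hz
      obtain ⟨i, hi⟩ : {i | z i = ⊤}.Nonempty := Set.nonempty_of_ncard_ne_zero (by omega)
      have hbelow (j : ℕ) : Function.update z i (j : ℕ∞) ≤ z :=
        update_le_iff.mpr ⟨hi ▸ le_top, fun _ _ => le_rfl⟩
      obtain ⟨j, hj⟩ := h _ (strictMono_update_coe z i) hbelow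
      rw [Set.mem_ofPred_eq, setOf_update_coe_eq_top] at hj
      have := Set.ncard_sdiff_singleton_add_one hi
      omega
    · intro hz f hf hfz
      obtain ⟨j, hj⟩ := exists_ncard_setOf_eq_top_lt hf hfz
      exact ⟨j, hj.trans_le (Nat.lt_succ_iff.mp hz)⟩

end ENat

theorem accelSet_natOmega_pow_general (d : ℕ) (n : ℕ) :
    AccelSet (Fin d → ℕ∞) n =
      {z : Fin d → ℕ∞ | {i : Fin d | z i = ⊤}.ncard < n} :=
  ENat.accelSet_pi n

/-- In `ℕ_ω^d` ordered componentwise, `A_n` is exactly the set of `d`-tuples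
with fewer than `n` components equal to `ω`. -/
theorem accelSet_natOmega_pow (d : ℕ) (hd : 1 ≤ d) (n : ℕ) :
    AccelSet (Fin d → ℕ∞) n =
      {z : Fin d → ℕ∞ | {i : Fin d | z i = ⊤}.ncard < n} :=
  accelSet_natOmega_pow_general d n
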